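/- arXiv:1511.05187 — 2 statements merged into one kernel-verified Lean document; each statement's English description precedes it below -/
import Mathlib

section
/- Let E be a real normed vector space, let a, b ∈ E, and let z = (a + b)/2 be their midpoint. Every bijective isometry S : E → E satisfying S a = a and S b = b also satisfies S z = z. -/
theorem bijective_isometry_fixing_endpoints_fixes_midpoint
    {E : Type*} [NormedAddCommGroup E] [NormedSpace ℝ E]
    (a b : E) (z : E) (hz : z = ((1 : ℝ)/2) • (a + b))
    (S : E → E) (hbij : Function.Bijective S)
    (hiso : ∀ x y : E, ‖S x - S y‖ = ‖x - y‖)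
    (ha : S a = a) (hb : S b = b) :
    S z = z := by
  have hisom : Isometry S := by
    intro x y
    simpa [edist_dist, dist_eq_norm] using congrArg ENNReal.ofReal (hiso x y)
  let e : E ≃ᵢ E := ⟨Equiv.ofBijective S hbij, hisom⟩
  have key := e.midpoint_fixed (x := a) (y := b) ha hb
  have hm : midpoint ℝ a b = z := by
    rw [midpoint_eq_smul_add, hz]; norm_num
  rwa [hm] at key
end

section
/- Let E be a real normed vector space, let a, b ∈ E, let z = (a + b)/2, and define the point reflection ψ : E → E by ψ(x) = 2•z - x. If S : E → E is a bijective isometry with S a = a and S b = b, then the map S* = ψ ∘ S⁻¹ ∘ ψ ∘ S is also a bijective isometry fixing a and b, and ‖S* z - z‖ = 2 ‖S z - z‖. -/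
theorem reflection_conjugate_doubles_displacement
    {E : Type*} [NormedAddCommGroup E] [NormedSpace ℝ E]
    (a b : E) (z : E) (hz : z = ((1 : ℝ)/2) • (a + b))
    (ψ : E → E) (hψ : ∀ x : E, ψ x = (2 : ℝ) • z - x)
    (S : E → E) (hbij : Function.Bijective S)
    (hiso : ∀ x y : E, ‖S x - S y‖ = ‖x - y‖)
    (ha : S a = a) (hb : S b = b) :
    Function.Bijective (ψ ∘ Function.invFun S ∘ ψ ∘ S) ∧
    (∀ x y : E, ‖(ψ ∘ Function.invFun S ∘ ψ ∘ S) x - (ψ ∘ Function.invFun S ∘ ψ ∘ S) y‖ = ‖x - y‖) ∧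
    (ψ ∘ Function.invFun S ∘ ψ ∘ S) a = a ∧
    (ψ ∘ Function.invFun S ∘ ψ ∘ S) b = b ∧
    ‖(ψ ∘ Function.invFun S ∘ ψ ∘ S) z - z‖ = 2 * ‖S z - z‖ := by
  set T := Function.invFun S with hT
  have hTS : ∀ x, T (S x) = x := fun x => Function.leftInverse_invFun hbij.1 x
  have hST : ∀ x, S (T x) = x := fun x => Function.rightInverse_invFun hbij.2 x
  have hTbij : Function.Bijective T :=
    Function.bijective_iff_has_inverse.mpr ⟨S, hST, hTS⟩
  have hψinv : Function.Involutive ψ := by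
    intro x; rw [hψ, hψ]; abel
  have hψbij : Function.Bijective ψ := hψinv.bijective
  have hψiso : ∀ x y : E, ‖ψ x - ψ y‖ = ‖x - y‖ := by
    intro x y
    rw [hψ, hψ]
    have : (2:ℝ) • z - x - ((2:ℝ) • z - y) = y - x := by abel
    rw [this, norm_sub_rev]
  have hTiso : ∀ x y : E, ‖T x - T y‖ = ‖x - y‖ := by
    intro x y
    rw [← hiso (T x) (T y), hST, hST]
  have hψa : ψ a = b := by
    rw [hψ, hz, smul_smul]
    norm_num
  have hψb : ψ b = a := by
    rw [hψ, hz, smul_smul]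
    norm_num
  have hψz : ψ z = z := by
    rw [hψ]
    rw [two_smul]; abel
  have hTa : T a = a := by conv_lhs => rw [← ha, hTS]
  have hTb : T b = b := by conv_lhs => rw [← hb, hTS]
  refine ⟨hψbij.comp (hTbij.comp (hψbij.comp hbij)), ?_, ?_, ?_, ?_⟩
  · intro x y
    simp only [Function.comp_apply, hψiso, hTiso, hiso]
  · simp [ha, hψa, hTb, hψb]
  · simp [hb, hψb, hTa, hψa]
  · have key : ‖ψ (T (ψ (S z))) - z‖ = ‖ψ (S z) - S z‖ := by
      calc ‖ψ (T (ψ (S z))) - z‖ = ‖ψ (T (ψ (S z))) - ψ z‖ := by rw [hψz]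
        _ = ‖T (ψ (S z)) - z‖ := hψiso _ _
        _ = ‖T (ψ (S z)) - T (S z)‖ := by rw [hTS]
        _ = ‖ψ (S z) - S z‖ := hTiso _ _
    simp only [Function.comp_apply]
    rw [key, hψ]
    have : (2:ℝ) • z - S z - S z = (2:ℝ) • (z - S z) := by
      rw [smul_sub, two_smul, two_smul]; abel
    rw [this, norm_smul, norm_sub_rev]
    norm_num
end
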